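/- Let c₁, c₂ > 0, let m, β, v ∈ ℝ³ and a ∈ ℝ with a² + ‖v‖² = 1. Then the pair of equations v × m − (1/2) a β − c₁ v = 0 and c₂ a v = 0 holds if and only if v = 0 and β = 0. Hence the only invariant configuration of the orientation-observer error dynamics on the unit quaternion sphere is the one with zero vector-part error and zero gyroscope-bias error. -/

import Mathlib

/-!
Since `c₂ > 0`, the bias equation forces `a = 0` or `v = 0`. If `a = 0`, pairing the other
equation with `v` kills `v × m` (it is orthogonal to `v`) and leaves `c₁ ‖v‖² = 0`, so `v = 0`,
contradicting `a² + ‖v‖² = 1`. Hence `v = 0`, so `a² = 1`, and the equation reduces to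
`(a / 2) β = 0`, i.e. `β = 0`.
-/

open Filter Real Topology

noncomputable section

/-- ℝ³ with the Euclidean norm. -/
abbrev E3 := EuclideanSpace ℝ (Fin 3)

/-- Cross product on ℝ³. -/
def cross (u v : E3) : E3 :=
  WithLp.toLp 2 ![u 1 * v 2 - u 2 * v 1, u 2 * v 0 - u 0 * v 2, u 0 * v 1 - u 1 * v 0]

/-- The quaternion with real (scalar) part `a` and vector (imaginary) part `v`. -/
def quat (a : ℝ) (v : E3) : Quaternion ℝ := ⟨a, v 0, v 1, v 2⟩

/-- The vector (imaginary) part of a quaternion, as an element of ℝ³. -/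
def qvec (q : Quaternion ℝ) : E3 := WithLp.toLp 2 ![q.imI, q.imJ, q.imK]

open scoped InnerProductSpace

theorem cross_eq_crossProduct (u w : E3) :
    cross u w = WithLp.toLp 2 (crossProduct (WithLp.ofLp u) (WithLp.ofLp w)) := by
  rw [cross, cross_apply]

@[simp]
theorem cross_zero_left (w : E3) : cross 0 w = 0 := by
  simp [cross_eq_crossProduct]

@[simp]
theorem inner_cross_self_left (u w : E3) : ⟪cross u w, u⟫_ℝ = 0 := by
  rw [cross_eq_crossProduct, EuclideanSpace.inner_eq_star_dotProduct, star_trivial]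
  exact dot_self_cross _ _

theorem eq_zero_of_cross_eq_smul_self {c : ℝ} (hc : c ≠ 0) {u w : E3}
    (h : cross u w = c • u) : u = 0 := by
  have hnorm : c * ‖u‖ ^ 2 = 0 := by
    rw [← real_inner_self_eq_norm_sq, ← real_inner_smul_left, ← h, inner_cross_self_left]
  simpa [hc] using hnorm

/-- On the unit sphere `a² + ‖v‖² = 1`, the orientation-observer error
dynamics are stationary, i.e. `v × m − (1/2) a β − c₁ v = 0` and `c₂ a v = 0`, if and only if
the vector-part error and the gyroscope-bias error both vanish: `v = 0` and `β = 0`. -/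
theorem stmt_17 (c₁ c₂ : ℝ) (hc₁ : 0 < c₁) (hc₂ : 0 < c₂)
    (m β v : E3) (a : ℝ) (hunit : a ^ 2 + ‖v‖ ^ 2 = 1) :
    (cross v m - (a / 2) • β - c₁ • v = 0 ∧ (c₂ * a) • v = 0) ↔ (v = 0 ∧ β = 0) := by
  constructor
  · rintro ⟨hstat, hbias⟩
    have hv : v = 0 := by
      rcases smul_eq_zero.1 hbias with hc₂a | hv_zero
      · have ha : a = 0 := (mul_eq_zero.1 hc₂a).resolve_left hc₂.ne'
        subst ha
        refine eq_zero_of_cross_eq_smul_self hc₁.ne' (w := m) ?_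
        simpa [sub_eq_zero] using hstat
      · exact hv_zero
    subst hv
    have ha : a ≠ 0 := by
      rintro rfl
      simp at hunit
    refine ⟨rfl, ?_⟩
    simpa [ha] using hstat
  · rintro ⟨rfl, rfl⟩
    simp
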